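/- Let 0 < α < 1, and let m, g, C, ρ, A, σ > 0. Set V = √(2mg/(CρA)) and c = (√2·σ^{1−α}/(2αm))·√(g·C·ρ·A·m), and define v(t) = V·tanh(c·(α + t^α)) for t > 0 and p_h(t) = t^{1−α}·σ^{α−1}·cosh²(c·(α + t^α)). Then for every t > 0, v is differentiable and m·p_h(t)·v′(t) = m·g; moreover, lim_{t→∞} v(t) = V = √(2mg/(CρA)), so the terminal velocity equals that of the classical resisted-fall equation m·v′ = mg − (CρA/2)·v². -/

import Mathlib

open Filter Topology

/-!
Substituting `s = c·(α + t^α)` turns the fractional equation into the classical one: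
`v = V·tanh s` has `v' = V·c·α·t^(α-1) / cosh² s`, and the factor `t^(1-α)·cosh² s` in `p_h`
cancels both the power of `t` and the `cosh²`, leaving the constant `m·V·c·α·σ^(α-1)`, which
the choice of `V` and `c` makes equal to `m·g`. The limit is `tanh s → 1` as `s → ∞`.
-/

namespace Real

theorem hasDerivAt_tanh (x : ℝ) : HasDerivAt tanh (1 / cosh x ^ 2) x := by
  have h := (hasDerivAt_sinh x).div (hasDerivAt_cosh x) (cosh_pos x).ne'
  have hquot : sinh / cosh = tanh := funext fun y => (tanh_eq_sinh_div_cosh y).symm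
  rwa [hquot, ← sq, ← sq, cosh_sq_sub_sinh_sq] at h

theorem tanh_eq_one_sub_two_div (x : ℝ) : tanh x = 1 - 2 / (exp (2 * x) + 1) := by
  have hexp : exp (2 * x) = exp x * exp x := by rw [two_mul, exp_add]
  have hden : exp x * exp x + 1 ≠ 0 := by positivity
  rw [tanh_eq_sinh_div_cosh, sinh_eq, cosh_eq, exp_neg, hexp]
  field_simp
  ring

theorem tendsto_tanh_atTop : Tendsto tanh atTop (𝓝 1) := by
  have hden : Tendsto (fun x : ℝ => exp (2 * x) + 1) atTop atTop :=
    (tendsto_exp_atTop.comp (tendsto_id.const_mul_atTop two_pos)).atTop_add tendsto_const_nhds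
  have h : Tendsto (fun x : ℝ => 1 - 2 / (exp (2 * x) + 1)) atTop (𝓝 1) := by
    simpa using tendsto_const_nhds.sub (tendsto_const_nhds.div_atTop hden)
  exact h.congr fun x => (tanh_eq_one_sub_two_div x).symm

theorem rpow_one_sub_mul_rpow_sub_one {x : ℝ} (hx : 0 < x) (a : ℝ) :
    x ^ (1 - a) * x ^ (a - 1) = 1 := by
  rw [← rpow_add hx, sub_add_sub_cancel, sub_self, rpow_zero]

end Real

open Real

theorem hasDerivAt_mul_tanh_mul_add_rpow (V c β α : ℝ) {t : ℝ} (ht : 0 < t) :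
    HasDerivAt (fun x : ℝ => V * tanh (c * (β + x ^ α)))
      (V * c * α * t ^ (α - 1) / cosh (c * (β + t ^ α)) ^ 2) t := by
  have hinner : HasDerivAt (fun x : ℝ => c * (β + x ^ α)) (c * (α * t ^ (α - 1))) t := by
    simpa using ((hasDerivAt_rpow_const (Or.inl ht.ne')).const_add β).const_mul c
  exact (((hasDerivAt_tanh _).comp t hinner).const_mul V).congr_deriv (by ring)

theorem tendsto_mul_tanh_mul_add_rpow_atTop (V β : ℝ) {c α : ℝ} (hc : 0 < c) (hα : 0 < α) :
    Tendsto (fun t : ℝ => V * tanh (c * (β + t ^ α))) atTop (𝓝 V) := by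
  have harg : Tendsto (fun t : ℝ => c * (β + t ^ α)) atTop atTop :=
    (tendsto_atTop_add_const_left atTop β (tendsto_rpow_atTop hα)).const_mul_atTop hc
  simpa using (tendsto_tanh_atTop.comp harg).const_mul V

theorem sqrt_two_mul_div_mul_sqrt_mul {m g k : ℝ} (hm : 0 ≤ m) (hg : 0 ≤ g) (hk : 0 < k) :
    √(2 * m * g / k) * (√2 * √(g * k * m)) = 2 * m * g := by
  have hprod : 2 * m * g / k * (g * k * m) = 2 * (m * g) ^ 2 := by
    field_simp
  calc √(2 * m * g / k) * (√2 * √(g * k * m))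
      = √2 * √(2 * (m * g) ^ 2) := by
        rw [mul_left_comm, ← sqrt_mul (by positivity), hprod]
    _ = (√2 * √2) * (m * g) := by
        rw [sqrt_mul zero_le_two, sqrt_sq (by positivity)]; ring
    _ = 2 * m * g := by rw [mul_self_sqrt zero_le_two]; ring

theorem terminal_velocity_mul_rate {α m g C ρ A σ : ℝ} (hα : 0 < α) (hm : 0 < m) (hg : 0 < g)
    (hC : 0 < C) (hρ : 0 < ρ) (hA : 0 < A) (hσ : 0 < σ) :
    √(2 * m * g / (C * ρ * A)) *
        (√2 * σ ^ (1 - α) / (2 * α * m) * √(g * C * ρ * A * m)) * α * σ ^ (α - 1) = g := by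
  have hsqrt := sqrt_two_mul_div_mul_sqrt_mul hm.le hg.le (by positivity : 0 < C * ρ * A)
  rw [show g * (C * ρ * A) * m = g * C * ρ * A * m by ring] at hsqrt
  calc _ = √(2 * m * g / (C * ρ * A)) * (√2 * √(g * C * ρ * A * m)) *
        (σ ^ (1 - α) * σ ^ (α - 1)) * α / (2 * α * m) := by ring
    _ = g := by rw [hsqrt, rpow_one_sub_mul_rpow_sub_one hσ]; field_simp

theorem fractional_resisted_fall_general
    (α m g C ρ A σ : ℝ) (hα0 : 0 < α)
    (hm : 0 < m) (hg : 0 < g) (hC : 0 < C) (hρ : 0 < ρ) (hA : 0 < A) (hσ : 0 < σ)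
    (V c : ℝ)
    (hV : V = Real.sqrt (2 * m * g / (C * ρ * A)))
    (hc : c = Real.sqrt 2 * σ ^ (1 - α) / (2 * α * m) * Real.sqrt (g * C * ρ * A * m))
    (v ph : ℝ → ℝ)
    (hv : ∀ t : ℝ, 0 < t → v t = V * Real.tanh (c * (α + t ^ α)))
    (hph : ∀ t : ℝ, 0 < t →
      ph t = t ^ (1 - α) * σ ^ (α - 1) * Real.cosh (c * (α + t ^ α)) ^ 2) :
    (∃ v' : ℝ → ℝ, (∀ t : ℝ, 0 < t → HasDerivAt v (v' t) t) ∧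
      ∀ t : ℝ, 0 < t → m * ph t * v' t = m * g) ∧
    Tendsto v atTop (𝓝 V) := by
  have hc0 : 0 < c := by rw [hc]; positivity
  have hVc : V * c * α * σ ^ (α - 1) = g := by
    rw [hV, hc]; exact terminal_velocity_mul_rate hα0 hm hg hC hρ hA hσ
  refine ⟨⟨fun t => V * c * α * t ^ (α - 1) / cosh (c * (α + t ^ α)) ^ 2,
    fun t ht => ?_, fun t ht => ?_⟩, ?_⟩
  · refine (hasDerivAt_mul_tanh_mul_add_rpow V c α α ht).congr_of_eventuallyEq ?_
    filter_upwards [eventually_gt_nhds ht] with x hx using hv x hx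
  · have hcosh : cosh (c * (α + t ^ α)) ^ 2 ≠ 0 := by positivity
    rw [hph t ht]
    calc _ = m * (t ^ (1 - α) * t ^ (α - 1)) * (V * c * α * σ ^ (α - 1)) *
          (cosh (c * (α + t ^ α)) ^ 2 / cosh (c * (α + t ^ α)) ^ 2) := by ring
      _ = m * g := by rw [rpow_one_sub_mul_rpow_sub_one ht, hVc, div_self hcosh, mul_one, mul_one]
  · refine (tendsto_mul_tanh_mul_add_rpow_atTop V α hc0 hα0).congr' ?_
    filter_upwards [eventually_gt_atTop 0] with t ht using (hv t ht).symm

/-- Let `0 < α < 1` and `m, g, C, ρ, A, σ > 0`. With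
`V = √(2mg/(CρA))`, `c = (√2·σ^{1-α}/(2αm))·√(g·C·ρ·A·m)`,
`v t = V·tanh(c·(α + t^α))` and `ph t = t^{1-α}·σ^{α-1}·cosh²(c·(α + t^α))`, the function
`v` is differentiable on `t > 0` and satisfies the fractional equation of motion
`m · ph t · v' t = m · g`; moreover `v t → V = √(2mg/(CρA))` as `t → ∞`, so the terminal
velocity equals that of the classical resisted-fall equation `m·v' = mg - (CρA/2)·v²`. -/
theorem fractional_resisted_fall
    (α m g C ρ A σ : ℝ) (hα0 : 0 < α) (hα1 : α < 1)
    (hm : 0 < m) (hg : 0 < g) (hC : 0 < C) (hρ : 0 < ρ) (hA : 0 < A) (hσ : 0 < σ)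
    (V c : ℝ)
    (hV : V = Real.sqrt (2 * m * g / (C * ρ * A)))
    (hc : c = Real.sqrt 2 * σ ^ (1 - α) / (2 * α * m) * Real.sqrt (g * C * ρ * A * m))
    (v ph : ℝ → ℝ)
    (hv : ∀ t : ℝ, 0 < t → v t = V * Real.tanh (c * (α + t ^ α)))
    (hph : ∀ t : ℝ, 0 < t →
      ph t = t ^ (1 - α) * σ ^ (α - 1) * Real.cosh (c * (α + t ^ α)) ^ 2) :
    (∃ v' : ℝ → ℝ, (∀ t : ℝ, 0 < t → HasDerivAt v (v' t) t) ∧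
      ∀ t : ℝ, 0 < t → m * ph t * v' t = m * g) ∧
    Tendsto v atTop (𝓝 V) :=
  fractional_resisted_fall_general α m g C ρ A σ hα0 hm hg hC hρ hA hσ V c hV hc v ph hv hph
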